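/- arXiv:math/0612679 — 2 statements merged into one kernel-verified Lean document; each statement's English description precedes it below -/
import Mathlib

section
/- Let s ≥ 1 and n ≥ 2 be integers and 0 ≤ k ≤ n. Then the value of F(s,n,k;q) at q = −1 equals C(s(n−1)+k, k)·C(n, k) + C(s(n−1)+k−1, k)·C(n−2, k−2) if n is even, and equals C(s(n−1)+k, k)·C(n−2, k) + C(s(n−1)+k−1, k−1)·C(n−2, k−2) if n is odd. -/
open Filter Topology

/-- The q-integer `[m]_q = 1 + q + ... + q^(m-1)`. -/
noncomputable def qInt (q : ℂ) (m : ℕ) : ℂ := ∑ i ∈ Finset.range m, q ^ i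

/-- The Gaussian binomial coefficient `[[m, k]]` as a polynomial over ℂ,
defined by the Pascal recurrence `[[m+1, k+1]] = [[m, k]] + q^(k+1)·[[m, k+1]]`;
it is the unique polynomial with `[[m,k]]·[k]!_q·[m−k]!_q = [m]!_q` for `0 ≤ k ≤ m`,
and it vanishes for `k > m`. -/
noncomputable def gbPoly : ℕ → ℕ → Polynomial ℂ
  | _, 0 => 1
  | 0, _ + 1 => 0
  | m + 1, k + 1 => gbPoly m k + Polynomial.X ^ (k + 1) * gbPoly m (k + 1)

/-- Evaluation of the Gaussian binomial `[[m, k]]` at `q : ℂ`. -/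
noncomputable def gb (m k : ℕ) (q : ℂ) : ℂ := (gbPoly m k).eval q

/-- Gaussian binomial with integer lower index (zero for negative lower index). -/
noncomputable def gbZ (m : ℕ) (k : ℤ) (q : ℂ) : ℂ := if 0 ≤ k then gb m k.toNat q else 0

/-- Binomial coefficient with integer lower index (zero for negative lower index). -/
def chooseZ (a : ℕ) (b : ℤ) : ℕ := if 0 ≤ b then a.choose b.toNat else 0

/-- `x` lies strictly inside the open counterclockwise arc from `a` to `b`. -/
def InArc {N : ℕ} (a b x : ZMod N) : Prop :=
  0 < (x - a).val ∧ (x - a).val < (b - a).val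

/-- An unordered pair of vertices of the `N`-gon is a diagonal. -/
def IsDiagonal {N : ℕ} (D : Sym2 (ZMod N)) : Prop :=
  ∃ a b : ZMod N, D = s(a, b) ∧ b ≠ a ∧ b ≠ a + 1 ∧ b ≠ a - 1

/-- Two chords cross: exactly one endpoint of the second lies in the open arc
from `a` to `b`, the other in the open arc from `b` to `a`. -/
def Crosses {N : ℕ} (D E : Sym2 (ZMod N)) : Prop :=
  ∃ a b c d : ZMod N, D = s(a, b) ∧ E = s(c, d) ∧
    InArc a b c ∧ InArc b a d

/-- A diagonal `{a,b}` is `s`-divisible: the representative of `b − a` is ≡ 1 (mod s). -/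
def SDivisible (s : ℕ) {N : ℕ} (D : Sym2 (ZMod N)) : Prop :=
  ∃ a b : ZMod N, D = s(a, b) ∧ (b - a).val % s = 1 % s

/-- Rotation of a chord by `r`. -/
def rotChord {N : ℕ} (r : ZMod N) (D : Sym2 (ZMod N)) : Sym2 (ZMod N) :=
  Sym2.map (· + r) D

/-- An `s`-divisible dissection of the `N`-gon using `k` noncrossing diagonals. -/
def IsDissection (s N k : ℕ) (π : Finset (Sym2 (ZMod N))) : Prop :=
  π.card = k ∧ (∀ D ∈ π, IsDiagonal D ∧ SDivisible s D) ∧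
    ∀ D ∈ π, ∀ E ∈ π, D ≠ E → ¬ Crosses D E

/-- Rotation of a dissection by `r`. -/
def rotDissection {N : ℕ} (r : ZMod N) (π : Finset (Sym2 (ZMod N))) :
    Finset (Sym2 (ZMod N)) := π.image (rotChord r)

/-- A diameter of the `(2sn+2)`-gon. -/
def IsDiameter (s n : ℕ) (D : Sym2 (ZMod (2*s*n+2))) : Prop :=
  ∃ a : ZMod (2*s*n+2), D = s(a, a + ((s*n+1 : ℕ) : ZMod (2*s*n+2)))

/-- Antipodal copy of a chord in the `(2sn+2)`-gon. -/
def antipodal (s n : ℕ) (D : Sym2 (ZMod (2*s*n+2))) : Sym2 (ZMod (2*s*n+2)) :=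
  rotChord ((s*n+1 : ℕ) : ZMod (2*s*n+2)) D

/-- A B-diagonal: a diameter, or a non-diameter `s`-divisible diagonal together
with its antipodal copy. -/
def IsBDiagonal (s n : ℕ) (B : Finset (Sym2 (ZMod (2*s*n+2)))) : Prop :=
  (∃ D, IsDiameter s n D ∧ B = {D}) ∨
  (∃ D, IsDiagonal D ∧ SDivisible s D ∧ ¬ IsDiameter s n D ∧ B = {D, antipodal s n D})

/-- A `k`-element set of pairwise noncrossing B-diagonals. -/
def IsBFace (s n k : ℕ) (π : Finset (Finset (Sym2 (ZMod (2*s*n+2))))) : Prop :=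
  π.card = k ∧ (∀ B ∈ π, IsBDiagonal s n B) ∧
    ∀ B₁ ∈ π, ∀ B₂ ∈ π, ∀ D ∈ B₁, ∀ E ∈ B₂, D ≠ E → ¬ Crosses D E

/-- Rotation of a set of B-diagonals by `r`. -/
def rotBFace (s n : ℕ) (r : ZMod (2*s*n+2)) (π : Finset (Finset (Sym2 (ZMod (2*s*n+2))))) :
    Finset (Finset (Sym2 (ZMod (2*s*n+2)))) := π.image (fun B => B.image (rotChord r))

/-- The edges of a graph on the vertices of the `N`-gon are pairwise noncrossing chords. -/
def NoncrossingEdges {N : ℕ} (G : SimpleGraph (ZMod N)) : Prop :=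
  ∀ e ∈ G.edgeSet, ∀ f ∈ G.edgeSet, e ≠ f → ¬ Crosses e f

/-- Rotation of a graph on `ZMod N` by `r`. -/
def rotGraph {N : ℕ} (r : ZMod N) (G : SimpleGraph (ZMod N)) : SimpleGraph (ZMod N) :=
  G.map (Equiv.addRight r).toEmbedding

/-- The polynomial `F(s,n,k;q)`, a q-analogue of the `k`-face number of `Δ^s(D_n)`. -/
noncomputable def Fq (s n k : ℕ) (q : ℂ) : ℂ :=
  gb (s * (n - 1) + k) k (q ^ 2) * gb (n - 1) k (q ^ 2)
    + q ^ n * (gb (s * (n - 1) + k) k (q ^ 2) * gbZ (n - 2) ((k : ℤ) - 1) (q ^ 2))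
    + gb (s * (n - 1) + k) k (q ^ 2) * gbZ (n - 2) ((k : ℤ) - 2) (q ^ 2)
    + q ^ n * (gb (s * (n - 1) + k - 1) k (q ^ 2) * gbZ (n - 2) ((k : ℤ) - 2) (q ^ 2))


lemma gb_one (m k : ℕ) : gb m k 1 = (m.choose k : ℂ) := by
  induction m generalizing k with
  | zero =>
    match k with
    | 0 => simp [gb, gbPoly]
    | k + 1 => simp [gb, gbPoly]
  | succ m ih =>
    match k with
    | 0 => simp [gb, gbPoly]
    | k + 1 =>
      have : gbPoly (m + 1) (k + 1)
          = gbPoly m k + Polynomial.X ^ (k + 1) * gbPoly m (k + 1) := rfl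
      simp only [gb, this, Polynomial.eval_add, Polynomial.eval_mul,
        Polynomial.eval_pow, Polynomial.eval_X, one_pow, one_mul]
      rw [show (gbPoly m k).eval 1 = gb m k 1 from rfl,
        show (gbPoly m (k+1)).eval 1 = gb m (k+1) 1 from rfl, ih, ih,
        Nat.choose_succ_succ]
      push_cast; ring

/-- The value of `F(s,n,k;q)` at `q = −1`. -/
theorem stmt14 (s n k : ℕ) (hs : 1 ≤ s) (hn : 2 ≤ n) (hk : k ≤ n) :
    Fq s n k (-1)
      = if Even n then
          ((Nat.choose (s * (n - 1) + k) k * Nat.choose n k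
            + Nat.choose (s * (n - 1) + k - 1) k * chooseZ (n - 2) ((k : ℤ) - 2) : ℕ) : ℂ)
        else
          ((Nat.choose (s * (n - 1) + k) k * Nat.choose (n - 2) k
            + chooseZ (s * (n - 1) + k - 1) ((k : ℤ) - 1) * chooseZ (n - 2) ((k : ℤ) - 2)
              : ℕ) : ℂ) := by
  obtain ⟨m, rfl⟩ : ∃ m, n = m + 2 := ⟨n - 2, by omega⟩
  have h2 : ((-1 : ℂ)) ^ 2 = 1 := by norm_num
  have hpow : ((-1 : ℂ)) ^ (m + 2) = (-1 : ℂ) ^ m := by ring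
  have hEv : Even (m + 2) ↔ Even m := by simp [Nat.even_add]
  rcases k with _ | _ | k
  · simp only [Fq, h2, hpow, gbZ, chooseZ, gb_one]
    norm_num
  · have e1 : ((1 : ℕ) : ℤ) - 1 = ((0 : ℕ) : ℤ) := by norm_num
    have e2 : ¬ (0 : ℤ) ≤ ((1 : ℕ) : ℤ) - 2 := by norm_num
    simp only [Fq, h2, hpow, gbZ, chooseZ, e1, if_neg e2, Int.toNat_natCast,
      if_pos (le_refl (0:ℤ)), Int.toNat_zero, gb_one, Nat.choose_zero_right,
      Nat.choose_one_right, mul_zero, zero_mul, add_zero, Nat.cast_one, mul_one]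
    rcases Nat.even_or_odd m with hm | hm
    · rw [if_pos (hEv.mpr hm), hm.neg_one_pow]
      push_cast [Nat.choose_one_right]
      ring
    · rw [if_neg (fun h => (Nat.not_even_iff_odd.mpr hm) (hEv.mp h)), hm.neg_one_pow]
      push_cast [Nat.choose_one_right]
      ring
  · obtain ⟨A, hA⟩ : ∃ A, s * (m + 1) + (k + 2) = A + 1 :=
      ⟨s * (m + 1) + (k + 2) - 1, by omega⟩
    have hA' : s * (m + 1) + (k + 2) - 1 = A := by omega
    have e1 : ((k + 2 : ℕ) : ℤ) - 1 = ((k + 1 : ℕ) : ℤ) := by push_cast; ring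
    have e2 : ((k + 2 : ℕ) : ℤ) - 2 = ((k : ℕ) : ℤ) := by push_cast; ring
    simp only [Fq, h2, hpow, gbZ, chooseZ, e1, e2, Int.toNat_natCast, gb_one,
      if_pos (by positivity : (0:ℤ) ≤ ((k+1:ℕ):ℤ)), if_pos (by positivity : (0:ℤ) ≤ ((k:ℕ):ℤ)),
      show m + 2 - 1 = m + 1 from rfl, show m + 2 - 2 = m from rfl]
    simp only [hA, hA']
    have pas1 : (A + 1).choose (k + 2) = A.choose (k + 1) + A.choose (k + 2) :=
      Nat.choose_succ_succ' A (k + 1)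
    have pas2 : (m + 1).choose (k + 2) = m.choose (k + 1) + m.choose (k + 2) :=
      Nat.choose_succ_succ' m (k + 1)
    have pas3 : (m + 2).choose (k + 2) = (m + 1).choose (k + 1) + (m + 1).choose (k + 2) :=
      Nat.choose_succ_succ' (m + 1) (k + 1)
    have pas4 : (m + 1).choose (k + 1) = m.choose k + m.choose (k + 1) :=
      Nat.choose_succ_succ' m k
    rcases Nat.even_or_odd m with hm | hm
    · rw [if_pos (hEv.mpr hm), hm.neg_one_pow]
      push_cast [pas1, pas2, pas3, pas4]
      ring
    · rw [if_neg (fun h => (Nat.not_even_iff_odd.mpr hm) (hEv.mp h)), hm.neg_one_pow]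
      push_cast [pas1, pas2, pas3, pas4]
      ring
end

section
/- Let s ≥ 1 and n ≥ 2 be integers and 0 ≤ k ≤ n. Let d ≥ 3 be a divisor of 2s(n−1)+2 and let ω ∈ ℂ be a primitive d-th root of unity. Then F(s,n,k;ω) equals: C((s(n−1)+1+k)/d − 1, k/d)·C(n/d, k/d) + C((s(n−1)+1+k)/d − 1, k/d)·C(n/d − 1, k/d − 1) if d is odd, d divides k, and d divides n; C((s(n−1)+1+k)/d − 1, k/d)·C(⌊(n−2)/d⌋, k/d) if d is odd, d divides k, and d does not divide n; C((2s(n−1)+2+2k)/d − 1, 2k/d)·C(2n/d, 2k/d) + C((2s(n−1)+2+2k)/d − 1, 2k/d)·C(2n/d − 1, 2k/d − 1) if d ≥ 4 is even, d divides 2k, and d divides n; C((2s(n−1)+2+2k)/d − 1, 2k/d)·C(⌊2(n−2)/d⌋, 2k/d) if d ≥ 4 is even, d divides 2k, and d does not divide n; and 0 otherwise. -/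
open Filter Topology

variable {q : ℂ}

lemma gb_zero (m : ℕ) : gb m 0 q = 1 := by
  cases m <;> simp [gb, gbPoly]

lemma gb_zero_succ (k : ℕ) : gb 0 (k+1) q = 0 := by simp [gb, gbPoly]

lemma gb_succ_succ (m k : ℕ) :
    gb (m+1) (k+1) q = gb m k q + q^(k+1) * gb m (k+1) q := by
  simp [gb, gbPoly]

lemma gb_of_lt : ∀ {m k : ℕ}, m < k → gb m k q = 0 := by
  intro m
  induction m with
  | zero =>
    intro k hk
    cases k with
    | zero => omega
    | succ k => exact gb_zero_succ k
  | succ m ih =>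
    intro k hk
    cases k with
    | zero => omega
    | succ k => rw [gb_succ_succ, ih (by omega), ih (by omega)]; ring

lemma gb_self (m : ℕ) : gb m m q = 1 := by
  induction m with
  | zero => exact gb_zero 0
  | succ m ih => rw [gb_succ_succ, ih, gb_of_lt (by omega)]; ring

lemma gb_pascal2 : ∀ m k : ℕ, gb (m+1) (k+1) q = q^(m-k) * gb m k q + gb m (k+1) q := by
  intro m
  induction m with
  | zero =>
    intro k
    cases k with
    | zero => simp [gb_succ_succ, gb_zero, gb_zero_succ]
    | succ k =>
      rw [gb_succ_succ, gb_zero_succ, gb_zero_succ]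
      ring
  | succ m ih =>
    intro k
    cases k with
    | zero =>
      rw [gb_succ_succ (m+1) 0]
      nth_rewrite 2 [gb_succ_succ m 0]
      rw [ih 0, gb_zero, gb_zero, Nat.sub_zero, Nat.sub_zero]
      ring
    | succ k =>
      rcases Nat.lt_or_ge k m with h | h
      · rw [gb_succ_succ (m+1) (k+1)]
        nth_rewrite 2 [gb_succ_succ m k]
        nth_rewrite 2 [gb_succ_succ m (k+1)]
        rw [ih k, ih (k+1)]
        rw [show m - k = m - (k+1) + 1 by omega, show m + 1 - (k+1) = m - (k+1) + 1 by omega]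
        ring
      · rw [gb_succ_succ (m+1) (k+1), gb_of_lt (show m+1 < k+1+1 by omega),
          show m + 1 - (k+1) = 0 by omega]
        ring

open Polynomial

noncomputable def Gp (q : ℂ) (m : ℕ) : Polynomial ℂ :=
  ∏ i ∈ Finset.range m, (1 + Polynomial.C (q ^ i) * Polynomial.X)

lemma Gp_coeff (q : ℂ) : ∀ m k : ℕ, (Gp q m).coeff k = gb m k q * q ^ (k.choose 2) := by
  intro m
  induction m with
  | zero =>
    intro k
    cases k with
    | zero => simp [Gp, gb_zero]
    | succ k => simp [Gp, gb_zero_succ, Polynomial.coeff_one]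
  | succ m ih =>
    intro k
    have hGp : Gp q (m+1) = Gp q m + C (q^m) * (Gp q m * X) := by
      rw [Gp, Finset.prod_range_succ, ← Gp]; ring
    cases k with
    | zero =>
      rw [hGp, coeff_add, coeff_C_mul, coeff_mul_X_zero, ih 0, gb_zero, gb_zero]
      ring
    | succ k =>
      rw [hGp, coeff_add, coeff_C_mul, coeff_mul_X, ih (k+1), ih k, gb_pascal2]
      rcases le_or_gt k m with h | h
      · have hC : (k+1).choose 2 = k.choose 2 + k := by
          rw [Nat.choose_succ_succ, Nat.choose_one_right, Nat.add_comm]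
        have hpow : q^(m-k) * q^((k+1).choose 2) = q^m * q^(k.choose 2) := by
          rw [← pow_add, ← pow_add]
          congr 1
          rw [hC]; omega
        linear_combination (-(gb m k q)) * hpow
      · rw [gb_of_lt h, gb_of_lt (show m < k+1 by omega)]
        ring

lemma choose_two_succ (n : ℕ) : (n+1).choose 2 = n.choose 2 + n := by
  rw [Nat.choose_succ_succ, Nat.choose_one_right, Nat.add_comm]

lemma choose_two_add (a : ℕ) : ∀ b : ℕ, (a+b).choose 2 = a.choose 2 + b.choose 2 + a*b := by
  intro b
  induction b with
  | zero => simp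
  | succ b ih =>
    rw [show a + (b+1) = (a+b)+1 by omega, choose_two_succ, ih, choose_two_succ]
    ring

section Prim

variable {e : ℕ} {ζ : ℂ} (he : 2 ≤ e) (hζ : IsPrimitiveRoot ζ e)
include he hζ

lemma prim_prod (y : ℂ) : ∏ i ∈ Finset.range e, (1 + ζ^i * y) = 1 - (-y)^e := by
  have hpos : 0 < e := by omega
  rcases eq_or_ne y 0 with rfl | hy
  · simp [hpos.ne']
  · have hinj : ∀ a ∈ Finset.range e, ∀ b ∈ Finset.range e, ζ^a = ζ^b → a = b := by
      intro a ha b hb hab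
      exact hζ.pow_inj (Finset.mem_range.mp ha) (Finset.mem_range.mp hb) hab
    have himg : (Finset.range e).image (ζ ^ ·) = Polynomial.nthRootsFinset e (1 : ℂ) := by
      apply Finset.eq_of_subset_of_card_le
      · intro x hx
        simp only [Finset.mem_image, Finset.mem_range] at hx
        obtain ⟨i, hi, rfl⟩ := hx
        rw [Polynomial.mem_nthRootsFinset hpos (1 : ℂ), ← pow_mul, mul_comm, pow_mul, hζ.pow_eq_one,
          one_pow]
      · rw [hζ.card_nthRootsFinset, Finset.card_image_of_injOn hinj, Finset.card_range]
    have hprod : ∀ x : ℂ, ∏ μ ∈ Polynomial.nthRootsFinset e (1 : ℂ), (x - μ) = x^e - 1 := by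
      intro x
      have := congrArg (Polynomial.eval x) (Polynomial.X_pow_sub_one_eq_prod hpos hζ)
      simpa [Polynomial.eval_prod] using this.symm
    have key : ∏ i ∈ Finset.range e, (1 + ζ^i * y)
        = ∏ i ∈ Finset.range e, ((-y) * ((-1/y) - ζ^i)) := by
      apply Finset.prod_congr rfl
      intro i _
      field_simp
      ring
    have himgprod : ∏ i ∈ Finset.range e, ((-1/y) - ζ^i)
        = ∏ μ ∈ Polynomial.nthRootsFinset e (1 : ℂ), ((-1/y) - μ) := by
      rw [← himg, Finset.prod_image hinj]
    rw [key, Finset.prod_mul_distrib, Finset.prod_const, Finset.card_range, himgprod, hprod]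
    have hne : (-y)^e ≠ 0 := pow_ne_zero _ (neg_ne_zero.mpr hy)
    field_simp
    rw [neg_pow]
    have h1 : ((-1:ℂ)^e) * ((-1:ℂ)^e) = 1 := by
      rw [← pow_add, Even.neg_one_pow ⟨e, rfl⟩]
    have hyinv : y^e * y⁻¹^e = 1 := by rw [← mul_pow, mul_inv_cancel₀ hy, one_pow]
    linear_combination ((-1:ℂ)^(e*2)) * hyinv + h1

lemma zeta_half (he2 : Even e) : ζ^(e/2) = -1 := by
  obtain ⟨u, hu⟩ := he2
  have hu' : e/2 = u := by omega
  have hsq : (ζ^u - 1) * (ζ^u + 1) = 0 := by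
    have : ζ^u * ζ^u = 1 := by
      rw [← pow_add, show u + u = e by omega, hζ.pow_eq_one]
    linear_combination this
  rcases mul_eq_zero.mp hsq with h | h
  · exfalso
    have h1 : ζ^u = 1 := by linear_combination h
    have hd := hζ.dvd_of_pow_eq_one u h1
    have := Nat.le_of_dvd (by omega) hd
    omega
  · rw [hu']
    linear_combination h

lemma zeta_choose : ζ^((e+1).choose 2) = (-1)^(e+1) := by
  rcases Nat.even_or_odd e with ⟨u, rfl⟩ | ⟨t, rfl⟩
  · have h : (u+u+1).choose 2 = u * (u+u+1) := by
      rw [Nat.choose_two_right, Nat.add_sub_cancel,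
        show (u+u+1) * (u+u) = u * (u+u+1) * 2 by ring, Nat.mul_div_cancel _ (by norm_num)]
    rw [h, pow_mul, show u = (u+u)/2 by omega, zeta_half he hζ ⟨u, by omega⟩]
  · have h : (2*t+1+1).choose 2 = (2*t+1) * (t+1) := by
      rw [Nat.choose_two_right, Nat.add_sub_cancel,
        show (2*t+1+1) * (2*t+1) = (2*t+1) * (t+1) * 2 by ring,
        Nat.mul_div_cancel _ (by norm_num)]
    rw [h, pow_mul, hζ.pow_eq_one, one_pow, Even.neg_one_pow ⟨t+1, by omega⟩]

lemma Gp_shift (m : ℕ) :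
    Gp ζ (m+e) = Gp ζ m * (1 + Polynomial.C ((-1:ℂ)^(e+1)) * Polynomial.X^e) := by
  apply Polynomial.funext
  intro x
  have heval : ∀ N : ℕ, Polynomial.eval x (Gp ζ N) = ∏ i ∈ Finset.range N, (1 + ζ^i * x) := by
    intro N
    rw [Gp, Polynomial.eval_prod]
    apply Finset.prod_congr rfl
    intro i _
    simp
  rw [Polynomial.eval_mul, heval, heval, Finset.prod_range_add]
  congr 1
  have h2 : ∏ j ∈ Finset.range e, (1 + ζ^(m+j) * x) = 1 - (-(ζ^m * x))^e := by
    rw [← prim_prod he hζ (ζ^m * x)]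
    apply Finset.prod_congr rfl
    intro j _
    rw [pow_add]
    ring
  rw [h2]
  have h3 : (-(ζ^m * x))^e = (-1)^e * x^e := by
    rw [neg_pow, mul_pow, ← pow_mul, mul_comm m e, pow_mul, hζ.pow_eq_one, one_pow]
    ring
  rw [h3]
  simp [pow_succ]
  ring

lemma gb_shift_lt (m k : ℕ) (hk : k < e) : gb (m+e) k ζ = gb m k ζ := by
  have h1 := Gp_coeff ζ (m+e) k
  have h2 := Gp_coeff ζ m k
  rw [Gp_shift he hζ m] at h1
  rw [mul_add, mul_one, Polynomial.coeff_add, ← mul_assoc,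
    mul_comm (Gp ζ m) (Polynomial.C ((-1:ℂ)^(e+1)))] at h1
  rw [Polynomial.coeff_mul_X_pow', if_neg (by omega), add_zero, h2] at h1
  have hz : ζ ≠ 0 := hζ.ne_zero (by omega)
  exact mul_right_cancel₀ (pow_ne_zero _ hz) h1.symm

lemma gb_shift_ge (m k : ℕ) (hk : e ≤ k) :
    gb (m+e) k ζ = gb m k ζ + gb m (k-e) ζ := by
  have h1 := Gp_coeff ζ (m+e) k
  have h2 := Gp_coeff ζ m k
  have h3 := Gp_coeff ζ m (k-e)
  rw [Gp_shift he hζ m] at h1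
  rw [mul_add, mul_one, Polynomial.coeff_add, ← mul_assoc,
    mul_comm (Gp ζ m) (Polynomial.C ((-1:ℂ)^(e+1)))] at h1
  rw [Polynomial.coeff_mul_X_pow', if_pos hk, Polynomial.coeff_C_mul, h2, h3] at h1
  have hz : ζ ≠ 0 := hζ.ne_zero (by omega)
  have hcomb : ζ^((k-e).choose 2) * (-1:ℂ)^(e+1) = ζ^(k.choose 2) := by
    have hk2 : k.choose 2 = (k-e).choose 2 + e.choose 2 + (k-e)*e := by
      have h4 := choose_two_add (k-e) e
      rw [Nat.sub_add_cancel hk] at h4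
      exact h4
    have hzc : (-1:ℂ)^(e+1) = ζ^(e.choose 2) := by
      rw [← zeta_choose he hζ, choose_two_succ, pow_add, hζ.pow_eq_one, mul_one]
    rw [hzc]
    simp only [hk2, pow_add, pow_mul', hζ.pow_eq_one, one_pow, mul_one]
  apply mul_right_cancel₀ (pow_ne_zero (k.choose 2) hz)
  linear_combination gb m (k-e) ζ * hcomb - h1

lemma gb_lucas : ∀ m k : ℕ, gb m k ζ = ((m/e).choose (k/e) : ℂ) * gb (m % e) (k % e) ζ := by
  intro m
  induction m using Nat.strong_induction_on with
  | _ m ih =>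
    intro k
    rcases Nat.lt_or_ge m e with hm | hm
    · rw [Nat.div_eq_of_lt hm, Nat.mod_eq_of_lt hm]
      rcases Nat.lt_or_ge k e with hke | hke
      · rw [Nat.div_eq_of_lt hke, Nat.mod_eq_of_lt hke, Nat.choose_zero_right]
        norm_num
      · rw [gb_of_lt (by omega), Nat.choose_eq_zero_of_lt (by
          have : 1 ≤ k / e := (Nat.one_le_div_iff (by omega)).mpr hke
          omega)]
        norm_num
    · have hm' : m = (m - e) + e := by omega
      rw [hm', Nat.add_div_right _ (by omega), Nat.add_mod_right]
      rcases Nat.lt_or_ge k e with hke | hke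
      · rw [gb_shift_lt he hζ _ _ hke, ih (m-e) (by omega) k, Nat.div_eq_of_lt hke]
        norm_num
      · rw [gb_shift_ge he hζ _ _ hke, ih (m-e) (by omega) k, ih (m-e) (by omega) (k-e)]
        have hj : 1 ≤ k / e := (Nat.one_le_div_iff (by omega)).mpr hke
        have h10 : e * (k / e - 1) + e = e * (k / e) := by
          have h11 : k / e - 1 + 1 = k / e := by omega
          calc e * (k/e - 1) + e = e * (k/e - 1 + 1) := by ring
            _ = e * (k/e) := by rw [h11]
        have hke1 : k - e = e * (k/e - 1) + k % e := by
          have h9 := Nat.div_add_mod k e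
          omega
        have hdiv : (k - e) / e = k/e - 1 := by
          rw [hke1, Nat.mul_add_div (by omega), Nat.div_eq_of_lt (Nat.mod_lt _ (by omega)),
            Nat.add_zero]
        have hmod : (k - e) % e = k % e := by
          rw [hke1, Nat.mul_add_mod, Nat.mod_mod_of_dvd _ dvd_rfl]
        obtain ⟨j, hjj⟩ : ∃ j, k/e = j + 1 := ⟨k/e - 1, by omega⟩
        rw [hdiv, hmod, hjj, Nat.succ_sub_one, Nat.choose_succ_succ]
        push_cast
        ring

end Prim

lemma nmod_eq_zero {a b : ℕ} (h : a ∣ b) : b % a = 0 := by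
  obtain ⟨c, rfl⟩ := h
  exact Nat.mul_mod_right a c

lemma divmodAux (e q r a : ℕ) (hr : r < e) (ha : a = e*q + r) : a / e = q ∧ a % e = r := by
  subst ha
  constructor
  · rw [Nat.mul_add_div (by omega), Nat.div_eq_of_lt hr, Nat.add_zero]
  · rw [Nat.mul_add_mod, Nat.mod_eq_of_lt hr]

lemma mulPredAux (e q : ℕ) (hq : 1 ≤ q) : e * (q - 1) + e = e * q := by
  have h11 : q - 1 + 1 = q := by omega
  calc e * (q - 1) + e = e * (q - 1 + 1) := by ring
    _ = e * q := by rw [h11]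

section App

variable {s n k e : ℕ} {ζ : ℂ}
variable (he : 2 ≤ e) (hζ : IsPrimitiveRoot ζ e)
variable (hs : 1 ≤ s) (hn : 2 ≤ n) (hdvd : e ∣ s * (n-1) + 1)
include he hζ hs hn hdvd

omit hζ in
lemma not_dvd_n1 : ¬ e ∣ (n - 1) := by
  intro h
  have h1 : e ∣ s * (n-1) := h.mul_left s
  have h2 : e ∣ 1 := (Nat.dvd_add_right h1).mp hdvd
  have := Nat.le_of_dvd one_pos h2
  omega

omit hζ in
lemma mod_n2_le : (n-2) % e ≤ e - 2 := by
  have hnd := not_dvd_n1 he hs hn hdvd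
  have hr1 : 1 ≤ (n-1) % e := by
    rcases Nat.eq_zero_or_pos ((n-1) % e) with h | h
    · exact absurd (Nat.dvd_of_mod_eq_zero h) hnd
    · omega
  have hrlt : (n-1) % e < e := Nat.mod_lt _ (by omega)
  have hdm := Nat.div_add_mod (n-1) e
  have h1 : (n-2) = e * ((n-1)/e) + ((n-1) % e - 1) := by omega
  have := (divmodAux e ((n-1)/e) ((n-1)%e - 1) (n-2) (by omega) h1).2
  omega

lemma gb_zero_mod (m : ℕ) (hm : k % e = 0) :
    gb m k ζ = ((m/e).choose (k/e) : ℂ) := by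
  rw [gb_lucas he hζ, hm, gb_zero, mul_one]

lemma hA_dvd (hk : e ∣ k) :
    gb (s*(n-1)+k) k ζ = ((((s*(n-1)+1+k)/e) - 1).choose (k/e) : ℂ) := by
  have hsn : 1 ≤ s * (n-1) := Nat.mul_pos hs (by omega)
  have hM : s*(n-1)+1+k = e * ((s*(n-1)+1+k)/e) := (Nat.mul_div_cancel' (dvd_add hdvd hk)).symm
  have hM1 : 1 ≤ (s*(n-1)+1+k)/e :=
    (Nat.one_le_div_iff (by omega)).mpr (Nat.le_of_dvd (by omega) (dvd_add hdvd hk))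
  have hMp := mulPredAux e _ hM1
  have hdm := divmodAux e ((s*(n-1)+1+k)/e - 1) (e-1) (s*(n-1)+k) (by omega) (by omega)
  rw [gb_zero_mod he hζ hs hn hdvd _ (nmod_eq_zero hk), hdm.1]

lemma hA'_dvd (hk : e ∣ k) :
    gb (s*(n-1)+k-1) k ζ = ((((s*(n-1)+1+k)/e) - 1).choose (k/e) : ℂ) := by
  have hsn : 1 ≤ s * (n-1) := Nat.mul_pos hs (by omega)
  have hM : s*(n-1)+1+k = e * ((s*(n-1)+1+k)/e) := (Nat.mul_div_cancel' (dvd_add hdvd hk)).symm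
  have hM1 : 1 ≤ (s*(n-1)+1+k)/e :=
    (Nat.one_le_div_iff (by omega)).mpr (Nat.le_of_dvd (by omega) (dvd_add hdvd hk))
  have hMp := mulPredAux e _ hM1
  have hdm := divmodAux e ((s*(n-1)+1+k)/e - 1) (e-2) (s*(n-1)+k-1) (by omega) (by omega)
  rw [gb_zero_mod he hζ hs hn hdvd _ (nmod_eq_zero hk), hdm.1]

lemma hB_dvd (hk : e ∣ k) :
    gb (n-1) k ζ = ((((n-1)/e)).choose (k/e) : ℂ) :=
  gb_zero_mod he hζ hs hn hdvd _ (nmod_eq_zero hk)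

lemma hC1_dvd (hk : e ∣ k) : gbZ (n-2) ((k:ℤ)-1) ζ = 0 := by
  rcases Nat.eq_zero_or_pos k with rfl | hkpos
  · simp [gbZ]
  · have hke : e ≤ k := Nat.le_of_dvd hkpos hk
    have hkk : k = e * (k/e) := (Nat.mul_div_cancel' hk).symm
    have hj : 1 ≤ k/e := (Nat.one_le_div_iff (by omega)).mpr hke
    have hMp := mulPredAux e _ hj
    have hdm := divmodAux e (k/e - 1) (e-1) (k-1) (by omega) (by omega)
    have htn : ((k:ℤ)-1).toNat = k - 1 := by omega
    rw [gbZ, if_pos (by omega), htn, gb_lucas he hζ, hdm.2,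
      gb_of_lt (by have := mod_n2_le he hs hn hdvd; omega), mul_zero]

lemma hC2_dvd (hk : e ∣ k) :
    gbZ (n-2) ((k:ℤ)-2) ζ
      = if e ∣ n then ((chooseZ (n/e - 1) ((k/e : ℤ) - 1) : ℕ) : ℂ) else 0 := by
  rcases Nat.eq_zero_or_pos k with rfl | hkpos
  · simp [gbZ, chooseZ]
  · have hke : e ≤ k := Nat.le_of_dvd hkpos hk
    have hkk : k = e * (k/e) := (Nat.mul_div_cancel' hk).symm
    have hj : 1 ≤ k/e := (Nat.one_le_div_iff (by omega)).mpr hke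
    have hMp := mulPredAux e _ hj
    have hkdm := divmodAux e (k/e - 1) (e-2) (k-2) (by omega) (by omega)
    have htn : ((k:ℤ)-2).toNat = k - 2 := by omega
    rw [gbZ, if_pos (by omega), htn, gb_lucas he hζ, hkdm.1, hkdm.2]
    by_cases hen : e ∣ n
    · have hnn : n = e * (n/e) := (Nat.mul_div_cancel' hen).symm
      have hn1 : 1 ≤ n/e := (Nat.one_le_div_iff (by omega)).mpr (Nat.le_of_dvd (by omega) hen)
      have hMq := mulPredAux e _ hn1
      have hndm := divmodAux e (n/e - 1) (e-2) (n-2) (by omega) (by omega)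
      rw [if_pos hen, hndm.1, hndm.2, gb_self, mul_one, chooseZ,
        if_pos (by omega), show ((k/e : ℤ) - 1).toNat = k/e - 1 by omega]
    · rw [if_neg hen]
      have hne : (n-2) % e ≠ e - 2 := by
        intro h
        apply hen
        have hdm2 := Nat.div_add_mod (n-2) e
        have hmp := mulPredAux e ((n-2)/e + 1) (Nat.le_add_left 1 _)
        simp only [Nat.add_sub_cancel] at hmp
        exact ⟨(n-2)/e + 1, by omega⟩
      rw [gb_of_lt (by have := mod_n2_le he hs hn hdvd; omega), mul_zero]

lemma hA_ndvd (hk : ¬ e ∣ k) : gb (s*(n-1)+k) k ζ = 0 := by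
  have hsn : 1 ≤ s * (n-1) := Nat.mul_pos hs (by omega)
  have hr1 : 1 ≤ k % e := by
    rcases Nat.eq_zero_or_pos (k % e) with h | h
    · exact absurd (Nat.dvd_of_mod_eq_zero h) hk
    · omega
  have hrlt : k % e < e := Nat.mod_lt _ (by omega)
  have hc : s*(n-1)+1 = e * ((s*(n-1)+1)/e) := (Nat.mul_div_cancel' hdvd).symm
  have hkdm := Nat.div_add_mod k e
  have hsplit : e * ((s*(n-1)+1)/e + k/e) = e * ((s*(n-1)+1)/e) + e * (k/e) := by ring
  have hdm := divmodAux e ((s*(n-1)+1)/e + k/e) (k % e - 1) (s*(n-1)+k) (by omega) (by omega)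
  rw [gb_lucas he hζ, hdm.2, gb_of_lt (by omega), mul_zero]

lemma hprod_ndvd (hk : ¬ e ∣ k) :
    gb (s*(n-1)+k-1) k ζ * gbZ (n-2) ((k:ℤ)-2) ζ = 0 := by
  have hsn : 1 ≤ s * (n-1) := Nat.mul_pos hs (by omega)
  have hr1 : 1 ≤ k % e := by
    rcases Nat.eq_zero_or_pos (k % e) with h | h
    · exact absurd (Nat.dvd_of_mod_eq_zero h) hk
    · omega
  have hrlt : k % e < e := Nat.mod_lt _ (by omega)
  rcases Nat.lt_or_ge (k % e) 2 with hr2 | hr2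
  · -- k % e = 1
    rcases Nat.lt_or_ge k 2 with hklt | hkge
    · have : ¬ (0:ℤ) ≤ (k:ℤ) - 2 := by omega
      rw [gbZ, if_neg this, mul_zero]
    · have hkdm := Nat.div_add_mod k e
      have hj : 1 ≤ k/e := by
        have hke : e ≤ k := by
          have := Nat.mod_lt k (show 0 < e by omega)
          rcases Nat.lt_or_ge k e with h | h
          · rw [Nat.mod_eq_of_lt h] at hr2; omega
          · omega
        exact (Nat.one_le_div_iff (by omega)).mpr hke
      have hMp := mulPredAux e _ hj
      have hdm := divmodAux e (k/e - 1) (e-1) (k-2) (by omega) (by omega)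
      have htn : ((k:ℤ)-2).toNat = k - 2 := by omega
      rw [gbZ, if_pos (by omega), htn, gb_lucas he hζ (n-2) (k-2), hdm.2,
        gb_of_lt (show (n-2) % e < e - 1 by have := mod_n2_le he hs hn hdvd; omega),
        mul_zero, mul_zero]
  · have hc : s*(n-1)+1 = e * ((s*(n-1)+1)/e) := (Nat.mul_div_cancel' hdvd).symm
    have hkdm := Nat.div_add_mod k e
    have hsplit : e * ((s*(n-1)+1)/e + k/e) = e * ((s*(n-1)+1)/e) + e * (k/e) := by ring
    have hdm := divmodAux e ((s*(n-1)+1)/e + k/e) (k % e - 2) (s*(n-1)+k-1) (by omega) (by omega)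
    rw [gb_lucas he hζ, hdm.2, gb_of_lt (by omega), mul_zero, zero_mul]

lemma Fq_eval (w : ℂ) (hw : w^2 = ζ) :
    Fq s n k w =
      if e ∣ k then
        ((((s*(n-1)+1+k)/e) - 1).choose (k/e) : ℂ) *
          ( (((n-1)/e).choose (k/e) : ℂ)
            + (1 + w^n) * (if e ∣ n then ((chooseZ (n/e - 1) ((k/e : ℤ) - 1) : ℕ) : ℂ) else 0) )
      else 0 := by
  rw [Fq, hw]
  by_cases hk : e ∣ k
  · rw [hA_dvd he hζ hs hn hdvd hk, hA'_dvd he hζ hs hn hdvd hk, hB_dvd he hζ hs hn hdvd hk,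
      hC1_dvd he hζ hs hn hdvd hk, hC2_dvd he hζ hs hn hdvd hk, if_pos hk]
    ring
  · rw [hA_ndvd he hζ hs hn hdvd hk, hprod_ndvd he hζ hs hn hdvd hk, if_neg hk]
    ring

end App

lemma pascal_chooseZ (a j : ℕ) (ha : 1 ≤ a) :
    a.choose j = (a-1).choose j + chooseZ (a-1) ((j:ℤ)-1) := by
  obtain ⟨b, rfl⟩ : ∃ b, a = b + 1 := ⟨a-1, by omega⟩
  cases j with
  | zero => simp [chooseZ]
  | succ j =>
    rw [Nat.add_sub_cancel, Nat.choose_succ_succ, chooseZ, if_pos (by omega)]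
    have h1 : (((j:ℕ)+1 : ℤ) - 1).toNat = j := by omega
    rw [show ((j+1 : ℕ) : ℤ) = ((j:ℕ)+1 : ℤ) by push_cast; ring, h1]
    simp only [Nat.succ_eq_add_one]
    omega

lemma div_pred_of_dvd {e n : ℕ} (he : 2 ≤ e) (hn : 1 ≤ n) (hen : e ∣ n) :
    (n-1)/e = n/e - 1 := by
  have hnn : n = e * (n/e) := (Nat.mul_div_cancel' hen).symm
  have h1 : 1 ≤ n/e := (Nat.one_le_div_iff (by omega)).mpr (Nat.le_of_dvd (by omega) hen)
  have hMp := mulPredAux e _ h1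
  exact (divmodAux e (n/e - 1) (e-1) (n-1) (by omega) (by omega)).1

/-- The value of `F(s,n,k;q)` at a primitive `d`-th root of unity `ω`,
where `d ≥ 3` divides `2s(n−1)+2`, given by the following case distinction. -/
theorem stmt16 (s n k d : ℕ) (hs : 1 ≤ s) (hn : 2 ≤ n) (hk : k ≤ n)
    (hd : 3 ≤ d) (hdvd : d ∣ (2 * s * (n - 1) + 2)) (ω : ℂ)
    (hω1 : ω ^ d = 1) (hω2 : ∀ e : ℕ, 0 < e → e < d → ω ^ e ≠ 1) :
    Fq s n k ω
      = if Odd d ∧ d ∣ k ∧ d ∣ n then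
          ((Nat.choose ((s * (n - 1) + 1 + k) / d - 1) (k / d) * Nat.choose (n / d) (k / d)
            + Nat.choose ((s * (n - 1) + 1 + k) / d - 1) (k / d) *
                chooseZ (n / d - 1) ((k / d : ℤ) - 1) : ℕ) : ℂ)
        else if Odd d ∧ d ∣ k then
          ((Nat.choose ((s * (n - 1) + 1 + k) / d - 1) (k / d) *
              Nat.choose ((n - 2) / d) (k / d) : ℕ) : ℂ)
        else if Even d ∧ d ∣ 2 * k ∧ d ∣ n then
          ((Nat.choose ((2 * s * (n - 1) + 2 + 2 * k) / d - 1) (2 * k / d) *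
              Nat.choose (2 * n / d) (2 * k / d)
            + Nat.choose ((2 * s * (n - 1) + 2 + 2 * k) / d - 1) (2 * k / d) *
                chooseZ (2 * n / d - 1) ((2 * k / d : ℤ) - 1) : ℕ) : ℂ)
        else if Even d ∧ d ∣ 2 * k then
          ((Nat.choose ((2 * s * (n - 1) + 2 + 2 * k) / d - 1) (2 * k / d) *
              Nat.choose (2 * (n - 2) / d) (2 * k / d) : ℕ) : ℂ)
        else 0 := by
  have hd0 : 0 < d := by omega
  have key : ∀ l : ℕ, ω ^ l = 1 → d ∣ l := by
    intro l hl
    have h1 : ω ^ (l % d) = 1 := by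
      have h2 : ω ^ l = ω ^ (d * (l / d) + l % d) := by rw [Nat.div_add_mod]
      rw [h2, pow_add, pow_mul, hω1, one_pow, one_mul] at hl
      exact hl
    rcases Nat.eq_zero_or_pos (l % d) with h | h
    · exact Nat.dvd_of_mod_eq_zero h
    · exact absurd h1 (hω2 _ h (Nat.mod_lt _ hd0))
  have hprim : IsPrimitiveRoot ω d := ⟨hω1, key⟩
  have hsn : 1 ≤ s * (n-1) := Nat.mul_pos hs (by omega)
  rcases Nat.even_or_odd d with heven | hodd
  · -- d even
    have hnotodd : ¬ Odd d := by simp [Nat.not_odd_iff_even.mpr heven]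
    obtain ⟨e, hde⟩ : ∃ e, d = 2 * e := by
      obtain ⟨e, he⟩ := heven; exact ⟨e, by omega⟩
    have he : 2 ≤ e := by omega
    have hζ : IsPrimitiveRoot (ω^2) e := by
      constructor
      · rw [← pow_mul, ← hde, hω1]
      · intro l hl
        rw [← pow_mul] at hl
        have h3 := key _ hl
        rw [hde] at h3
        exact (Nat.mul_dvd_mul_iff_left (show 0 < 2 by omega)).mp h3
    have hdvd' : e ∣ s * (n-1) + 1 := by
      obtain ⟨c, hc⟩ := hdvd
      refine ⟨c, ?_⟩
      rw [hde] at hc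
      have h4 : 2 * (s * (n-1) + 1) = 2 * (e * c) := by
        calc 2 * (s*(n-1)+1) = 2*s*(n-1)+2 := by ring
        _ = 2*e*c := hc
        _ = 2*(e*c) := by ring
      exact Nat.eq_of_mul_eq_mul_left (by norm_num) h4
    have hωe : ω ^ e = -1 := by
      have hsq : (ω^e - 1) * (ω^e + 1) = 0 := by
        have h2 : ω^e * ω^e = 1 := by rw [← pow_add, show e + e = d by omega, hω1]
        linear_combination h2
      rcases mul_eq_zero.mp hsq with h | h
      · exact absurd (by linear_combination h) (hω2 e (by omega) (by omega))
      · linear_combination h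
    rw [Fq_eval he hζ hs hn hdvd' ω rfl]
    have hek : e ∣ k ↔ d ∣ 2 * k := by
      rw [hde, Nat.mul_dvd_mul_iff_left (show 0 < 2 by omega)]
    have hdiv2 : ∀ a : ℕ, 2 * a / d = a / e := by
      intro a
      rw [hde, Nat.mul_div_mul_left _ _ (show 0 < 2 by omega)]
    have hMeq : (2 * s * (n - 1) + 2 + 2 * k) / d = (s * (n-1) + 1 + k) / e := by
      rw [show 2 * s * (n - 1) + 2 + 2 * k = 2 * (s * (n-1) + 1 + k) by ring, hdiv2]
    have hczk : (2 * (k:ℤ)) / (d:ℤ) = (k:ℤ)/(e:ℤ) := by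
      rw [hde]
      push_cast
      rw [Int.mul_ediv_mul_of_pos _ _ (show (0:ℤ) < 2 by norm_num)]
    by_cases h2k : d ∣ 2 * k
    · have hekk : e ∣ k := hek.mpr h2k
      rw [if_pos hekk,
        if_neg (show ¬(Odd d ∧ d ∣ k ∧ d ∣ n) from fun h => hnotodd h.1),
        if_neg (show ¬(Odd d ∧ d ∣ k) from fun h => hnotodd h.1)]
      by_cases hdn : d ∣ n
      · rw [if_pos (show Even d ∧ d ∣ 2 * k ∧ d ∣ n from ⟨heven, h2k, hdn⟩)]
        have hen : e ∣ n := dvd_trans (dvd_mul_left e 2) (hde ▸ hdn)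
        have hωn : ω ^ n = 1 := by
          obtain ⟨t, rfl⟩ := hdn
          rw [pow_mul, hω1, one_pow]
        have hne1 : 1 ≤ n / e := (Nat.one_le_div_iff (by omega)).mpr
          (Nat.le_of_dvd (by omega) hen)
        have hpred : (n-1)/e = n/e - 1 := div_pred_of_dvd he (by omega) hen
        have hpas := pascal_chooseZ (n/e) (k/e) hne1
        rw [show ((k/e : ℕ) : ℤ) = (k:ℤ)/(e:ℤ) from Int.natCast_ediv k e] at hpas
        rw [if_pos hen, hMeq, hdiv2 k, hdiv2 n, hωn, hpred, hczk, hpas]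
        push_cast
        ring
      · rw [if_neg (show ¬(Even d ∧ d ∣ 2 * k ∧ d ∣ n) from fun h => hdn h.2.2),
          if_pos (show Even d ∧ d ∣ 2 * k from ⟨heven, h2k⟩)]
        have hzero : (1 + ω ^ n) *
            (if e ∣ n then ((chooseZ (n/e - 1) ((k/e : ℤ) - 1) : ℕ) : ℂ) else 0) = 0 := by
          by_cases hen : e ∣ n
          · have hodd2 : Odd (n / e) := by
              rcases Nat.even_or_odd (n / e) with hev | hodd2
              · exfalso
                apply hdn
                obtain ⟨u, hu⟩ := hev
                have hnn : n = e * (n/e) := (Nat.mul_div_cancel' hen).symm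
                rw [hu] at hnn
                refine ⟨u, ?_⟩
                have h3 : e * (u + u) = 2 * e * u := by ring
                have h4 : d * u = 2 * e * u := by rw [hde]
                omega
              · exact hodd2
            have hωn : ω ^ n = -1 := by
              have hnn : n = e * (n/e) := (Nat.mul_div_cancel' hen).symm
              rw [hnn, pow_mul, hωe, Odd.neg_one_pow hodd2]
            rw [hωn]
            ring
          · rw [if_neg hen, mul_zero]
        rw [hzero]
        have hnd1 : ¬ e ∣ (n-1) := not_dvd_n1 he hs hn hdvd'
        have hpred : (n-1)/e = (n-2)/e := by
          rw [show n-1 = (n-2)+1 by omega]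
          exact Nat.succ_div_of_not_dvd (by rw [show n-2+1 = n-1 by omega]; exact hnd1)
        rw [hMeq, hdiv2 k, hdiv2 (n-2), hpred]
        push_cast
        ring
    · have hekk : ¬ e ∣ k := fun h => h2k (hek.mp h)
      rw [if_neg hekk,
        if_neg (show ¬(Odd d ∧ d ∣ k ∧ d ∣ n) from fun h => hnotodd h.1),
        if_neg (show ¬(Odd d ∧ d ∣ k) from fun h => hnotodd h.1),
        if_neg (show ¬(Even d ∧ d ∣ 2 * k ∧ d ∣ n) from fun h => h2k h.2.1),
        if_neg (show ¬(Even d ∧ d ∣ 2 * k) from fun h => h2k h.2)]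
  · -- d odd
    have hnoteven : ¬ Even d := Nat.not_even_iff_odd.mpr hodd
    have he : 2 ≤ d := by omega
    have hζ : IsPrimitiveRoot (ω^2) d := hprim.pow_of_coprime 2 (Nat.coprime_two_left.mpr hodd)
    have hdvd' : d ∣ s * (n-1) + 1 := by
      have h1 : d ∣ (s * (n-1) + 1) * 2 := by
        rw [show (s * (n-1) + 1) * 2 = 2 * s * (n-1) + 2 by ring]
        exact hdvd
      exact (Nat.Coprime.dvd_of_dvd_mul_right (Nat.coprime_two_right.mpr hodd) h1)
    rw [Fq_eval he hζ hs hn hdvd' ω rfl]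
    by_cases hdk : d ∣ k
    · by_cases hdn : d ∣ n
      · rw [if_pos hdk, if_pos hdn, if_pos (show Odd d ∧ d ∣ k ∧ d ∣ n from ⟨hodd, hdk, hdn⟩)]
        have hωn : ω ^ n = 1 := by
          obtain ⟨t, rfl⟩ := hdn
          rw [pow_mul, hω1, one_pow]
        have hne1 : 1 ≤ n / d := (Nat.one_le_div_iff (by omega)).mpr
          (Nat.le_of_dvd (by omega) hdn)
        have hpred : (n-1)/d = n/d - 1 := div_pred_of_dvd he (by omega) hdn
        have hpas := pascal_chooseZ (n/d) (k/d) hne1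
        rw [show ((k/d : ℕ) : ℤ) = (k:ℤ)/(d:ℤ) from Int.natCast_ediv k d] at hpas
        rw [hωn, hpred, hpas]
        push_cast
        ring
      · rw [if_pos hdk, if_neg hdn,
          if_neg (show ¬(Odd d ∧ d ∣ k ∧ d ∣ n) from fun h => hdn h.2.2),
          if_pos (show Odd d ∧ d ∣ k from ⟨hodd, hdk⟩)]
        have hnd1 : ¬ d ∣ (n-1) := not_dvd_n1 he hs hn hdvd'
        have hpred : (n-1)/d = (n-2)/d := by
          rw [show n-1 = (n-2)+1 by omega]
          exact Nat.succ_div_of_not_dvd (by rw [show n-2+1 = n-1 by omega]; exact hnd1)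
        rw [hpred]
        push_cast
        ring
    · rw [if_neg hdk,
        if_neg (show ¬(Odd d ∧ d ∣ k ∧ d ∣ n) from fun h => hdk h.2.1),
        if_neg (show ¬(Odd d ∧ d ∣ k) from fun h => hdk h.2),
        if_neg (show ¬(Even d ∧ d ∣ 2 * k ∧ d ∣ n) from fun h => hnoteven h.1),
        if_neg (show ¬(Even d ∧ d ∣ 2 * k) from fun h => hnoteven h.1)]
end
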